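/- The function h ↦ δ_m(h) := inf{ mes{ t ∈ [0, 2π) : ∏_{j=1}^m |2 sin((t − φ_j)/2)| ≥ h } : φ ∈ ℝ^m } is strictly decreasing on [0, 2], with δ_m(0) = 2π and δ_m(2) = 0; moreover for each h ∈ [0, 2] the infimum is attained at some φ* ∈ ℝ^m. -/

import Mathlib

open Real MeasureTheory

/-!
Write `P_φ(t) = ∏ⱼ |2 sin((t - φⱼ)/2)| = |∏ⱼ (e^{it} - e^{iφⱼ})|`. The monic polynomial
`∏ⱼ (z - e^{iφⱼ})` has constant coefficient of modulus one, so averaging it over the `m` points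
`w ζᵏ` with `wᵐ` equal to that coefficient shows that `P_φ` reaches a value `≥ 2`; as `P_φ` also
vanishes and is continuous and `2π`-periodic, every band `{h₁ < P_φ < h₂}` with `0 ≤ h₁ < h₂ ≤ 2`
contains an interval of the period, so `h ↦ mes{P_φ ≥ h}` is strictly decreasing on `[0, 2]`.
Since `P_φ²` is a nonconstant real-analytic function, the level sets of `P_φ` are null, which makes
`φ ↦ mes{P_φ ≥ h}` continuous; it is `2π`-periodic in each `φⱼ`, hence attains its infimum on
`[0, 2π]ᵐ`, and a minimiser at `h₁` transfers the strict decrease to `δ`. For equally spaced `φ`,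
`P_φ(t) = |e^{imt} - 1| ≤ 2`, so `{P_φ ≥ 2}` is a level set and `δ(2) = 0`.
-/

section RootsOfUnity

open Polynomial Finset

theorem Polynomial.sum_eval_mul_pow_of_isPrimitiveRoot {R : Type*} [CommRing R] [IsDomain R]
    {Q : R[X]} {m : ℕ} (hm : 0 < m) (hQ : Q.natDegree ≤ m) {ζ : R} (hζ : IsPrimitiveRoot ζ m)
    (z : R) : ∑ k ∈ range m, Q.eval (z * ζ ^ k) = m * (Q.coeff 0 + Q.coeff m * z ^ m) := by
  have hgeom : ∀ j, 0 < j → j < m → ∑ k ∈ range m, (ζ ^ j) ^ k = 0 := fun j hj hjm =>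
    eq_zero_of_ne_zero_of_mul_left_eq_zero
      (sub_ne_zero_of_ne (hζ.pow_ne_one_of_pos_of_lt hj.ne' hjm).symm)
      (by rw [mul_neg_geom_sum, ← pow_mul, mul_comm, pow_mul, hζ.pow_eq_one, one_pow, sub_self])
  obtain ⟨n, rfl⟩ : ∃ n, m = n + 1 := ⟨m - 1, by omega⟩
  calc ∑ k ∈ range (n + 1), Q.eval (z * ζ ^ k)
      = ∑ j ∈ range (n + 2), Q.coeff j * z ^ j * ∑ k ∈ range (n + 1), (ζ ^ j) ^ k := by
        simp_rw [eval_eq_sum_range' (Nat.lt_succ_of_le hQ), mul_sum]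
        rw [sum_comm]
        refine sum_congr rfl fun j _ => sum_congr rfl fun k _ => ?_
        ring
    _ = (n + 1 : ℕ) * (Q.coeff 0 + Q.coeff (n + 1) * z ^ (n + 1)) := by
        rw [sum_range_succ, sum_range_succ', sum_eq_zero fun i hi =>
          by rw [hgeom (i + 1) i.succ_pos (by simpa using hi), mul_zero]]
        simp only [hζ.pow_eq_one, pow_zero, one_pow, sum_const, card_range, nsmul_one]
        ring

theorem Polynomial.Monic.exists_norm_eq_one_two_le_norm_eval {Q : ℂ[X]} (hQ : Q.Monic)
    (hdeg : 0 < Q.natDegree) (h0 : ‖Q.coeff 0‖ = 1) : ∃ z : ℂ, ‖z‖ = 1 ∧ 2 ≤ ‖Q.eval z‖ := by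
  set m := Q.natDegree
  obtain ⟨w, hw⟩ := IsAlgClosed.exists_pow_nat_eq (Q.coeff 0) hdeg
  have hw_norm : ‖w‖ = 1 :=
    (pow_eq_one_iff_of_nonneg (norm_nonneg w) hdeg.ne').1 (by rw [← norm_pow, hw, h0])
  have hζ := Complex.isPrimitiveRoot_exp m hdeg.ne'
  set ζ := Complex.exp (2 * π * Complex.I / m)
  -- Averaging over the rotated roots of unity `w ζ^k` kills every coefficient but the extreme ones.
  have hsum := sum_eval_mul_pow_of_isPrimitiveRoot hdeg le_rfl hζ w
  rw [hQ.coeff_natDegree, one_mul, hw] at hsum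
  have hle : ∑ _k ∈ range m, (2 : ℝ) ≤ ∑ k ∈ range m, ‖Q.eval (w * ζ ^ k)‖ :=
    calc ∑ _k ∈ range m, (2 : ℝ) = ‖∑ k ∈ range m, Q.eval (w * ζ ^ k)‖ := by
          rw [hsum, ← two_mul, norm_mul, norm_mul, h0]; simp
      _ ≤ _ := norm_sum_le _ _
  obtain ⟨k, -, hk⟩ := exists_le_of_sum_le (nonempty_range_iff.2 hdeg.ne') hle
  refine ⟨w * ζ ^ k, ?_, hk⟩
  rw [norm_mul, norm_pow, hw_norm, hζ.norm'_eq_one hdeg.ne', one_pow, one_mul]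

end RootsOfUnity

theorem AnalyticOnNhd.ae_ne_zero {E : Type*} [NormedAddCommGroup E] [NormedSpace ℝ E]
    {f : ℝ → E} (hf : AnalyticOnNhd ℝ f Set.univ) (hne : ∃ x, f x ≠ 0) : ∀ᵐ x, f x ≠ 0 := by
  obtain ⟨x, hx⟩ := hne
  have hcodiscrete := (hf.eqOn_zero_or_eventually_ne_zero_of_preconnected
    isPreconnected_univ).resolve_left fun h => hx (h (Set.mem_univ x))
  have := ae_restrict_le_codiscreteWithin (μ := volume) MeasurableSet.univ hcodiscrete
  rwa [Measure.restrict_univ] at this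

theorem continuousAt_measure_setOf_le {X α : Type*} [TopologicalSpace X]
    [FirstCountableTopology X] [MeasurableSpace α] {μ : Measure α} [IsFiniteMeasure μ]
    {f : X → α → ℝ} (hf : ∀ a, Continuous fun x => f x a)
    (hmeas : ∀ x, Measurable (f x)) {x : X} {c : ℝ} (hc : ∀ᵐ a ∂μ, f x a ≠ c) :
    ContinuousAt (fun y => μ {a | c ≤ f y a}) x := by
  refine tendsto_measure_of_ae_tendsto_indicator_of_isFiniteMeasure _
    (measurableSet_le measurable_const (hmeas x))
    (fun y => measurableSet_le measurable_const (hmeas y)) ?_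
  filter_upwards [hc] with a ha
  rcases ha.lt_or_gt with hlt | hgt
  · filter_upwards [(hf a).continuousAt.eventually_lt continuousAt_const hlt] with y hy
    simp only [not_le.2 hy, not_le.2 hlt]
  · filter_upwards [continuousAt_const.eventually_lt (hf a).continuousAt hgt] with y hy
    simp only [hy.le, hgt.le]

section ChordProduct

open Set Complex Polynomial

variable {m : ℕ}

noncomputable def chordProduct (φ : Fin m → ℝ) (t : ℝ) : ℝ :=
  ∏ j, |2 * Real.sin ((t - φ j) / 2)|

theorem norm_exp_mul_I_sub_exp_mul_I (t φ : ℝ) :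
    ‖exp (t * I) - exp (φ * I)‖ = |2 * Real.sin ((t - φ) / 2)| := by
  have hfactor : exp (t * I) - exp (φ * I) = exp (φ * I) * (exp (I * ↑(t - φ)) - 1) := by
    rw [mul_sub, ← Complex.exp_add, mul_one]; push_cast; ring_nf
  rw [hfactor, norm_mul, norm_exp_ofReal_mul_I, one_mul, norm_exp_I_mul_ofReal_sub_one,
    Real.norm_eq_abs]

theorem chordProduct_eq_norm_prod (φ : Fin m → ℝ) (t : ℝ) :
    chordProduct φ t = ‖∏ j, (exp (t * I) - exp (φ j * I))‖ := by
  simp only [chordProduct, norm_prod, norm_exp_mul_I_sub_exp_mul_I]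

theorem chordProduct_nonneg (φ : Fin m → ℝ) (t : ℝ) : 0 ≤ chordProduct φ t :=
  Finset.prod_nonneg fun _ _ => abs_nonneg _

theorem chordProduct_apply_self (φ : Fin m → ℝ) (j : Fin m) : chordProduct φ (φ j) = 0 :=
  Finset.prod_eq_zero (Finset.mem_univ j) (by simp)

theorem continuous_chordProduct (φ : Fin m → ℝ) : Continuous (chordProduct φ) := by
  unfold chordProduct; fun_prop

theorem continuous_chordProduct_left (t : ℝ) :
    Continuous fun φ : Fin m → ℝ => chordProduct φ t := by
  unfold chordProduct; fun_prop

theorem exp_toIcoMod_mul_I (x : ℝ) : exp (toIcoMod two_pi_pos 0 x * I) = exp (x * I) := by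
  rw [← self_sub_toIcoDiv_zsmul]
  push_cast
  exact exp_mul_I_periodic.sub_zsmul_eq _

theorem chordProduct_toIcoMod (φ : Fin m → ℝ) (t : ℝ) :
    chordProduct φ (toIcoMod two_pi_pos 0 t) = chordProduct φ t := by
  simp only [chordProduct_eq_norm_prod, exp_toIcoMod_mul_I]

theorem chordProduct_toIcoMod_left (φ : Fin m → ℝ) (t : ℝ) :
    chordProduct (fun j => toIcoMod two_pi_pos 0 (φ j)) t = chordProduct φ t := by
  simp only [chordProduct_eq_norm_prod, exp_toIcoMod_mul_I]

theorem exists_two_le_chordProduct (hm : 0 < m) (φ : Fin m → ℝ) :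
    ∃ s, 2 ≤ chordProduct φ s := by
  set Q : ℂ[X] := ∏ j, (X - C (exp (φ j * I)))
  have hQ : Q.Monic := monic_prod_of_monic _ _ fun j _ => monic_X_sub_C _
  have hdeg : Q.natDegree = m := by
    rw [natDegree_prod_of_monic _ _ fun j _ => monic_X_sub_C _]; simp
  have h0 : ‖Q.coeff 0‖ = 1 := by
    simp [Q, coeff_zero_eq_eval_zero, eval_prod, norm_prod]
  obtain ⟨z, hz, hQz⟩ := hQ.exists_norm_eq_one_two_le_norm_eval (hdeg ▸ hm) h0
  have hexp : exp (arg z * I) = z := by simpa [hz] using norm_mul_exp_arg_mul_I z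
  refine ⟨arg z, ?_⟩
  simpa [chordProduct_eq_norm_prod, hexp, Q, eval_prod] using hQz

theorem Icc_subset_range_chordProduct (hm : 0 < m) (φ : Fin m → ℝ) :
    Icc 0 2 ⊆ range (chordProduct φ) := by
  obtain ⟨s, hs⟩ := exists_two_le_chordProduct hm φ
  exact (Icc_subset_Icc_right hs).trans <|
    (isPreconnected_range (continuous_chordProduct φ)).Icc_subset
      ⟨φ ⟨0, hm⟩, chordProduct_apply_self φ _⟩ ⟨s, rfl⟩

theorem ae_chordProduct_ne (hm : 0 < m) (φ : Fin m → ℝ) (c : ℝ) :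
    ∀ᵐ t, chordProduct φ t ≠ c := by
  set g : ℝ → ℝ := fun t => ∏ j, (2 * Real.sin ((t - φ j) / 2)) ^ 2 - c ^ 2
  have hg : ∀ t, g t = chordProduct φ t ^ 2 - c ^ 2 := fun t => by
    simp only [g, chordProduct, ← Finset.prod_pow, sq_abs]
  have hg_analytic : AnalyticOnNhd ℝ g univ := fun t _ => by fun_prop
  have hg_ne : ∃ t, g t ≠ 0 := by
    by_contra! hg_zero
    obtain ⟨s, hs⟩ := exists_two_le_chordProduct hm φ
    have hc : c ^ 2 = 0 := by simpa [hg, chordProduct_apply_self] using hg_zero (φ ⟨0, hm⟩)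
    have := hg_zero s
    rw [hg, hc] at this
    nlinarith
  filter_upwards [hg_analytic.ae_ne_zero hg_ne] with t ht hc
  exact ht (by rw [hg, hc, sub_self])

theorem chordProduct_equispaced_le_two (hm : 0 < m) (t : ℝ) :
    chordProduct (fun j : Fin m => 2 * π * (j : ℕ) / m) t ≤ 2 := by
  have hζ := Complex.isPrimitiveRoot_exp m hm.ne'
  have hroots : ∀ j : Fin m,
      exp (((2 * π * (j : ℕ) / m : ℝ) : ℂ) * I) = exp (2 * π * I / m) ^ (j : ℕ) := fun j => by
    rw [← Complex.exp_nat_mul]; congr 1; push_cast; ring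
  have hprod : ∏ j : Fin m, (exp (t * I) - exp (((2 * π * (j : ℕ) / m : ℝ) : ℂ) * I))
      = exp (t * I) ^ m - 1 := by
    have := congrArg (eval (exp (t * I))) (X_pow_sub_C_eq_prod hζ hm (one_pow m))
    simp only [eval_sub, eval_pow, eval_X, eval_C, eval_prod, mul_one] at this
    rw [this, ← Fin.prod_univ_eq_prod_range]
    simp only [hroots]
  rw [chordProduct_eq_norm_prod, hprod]
  calc ‖exp (t * I) ^ m - 1‖ ≤ ‖exp (t * I) ^ m‖ + ‖(1 : ℂ)‖ := norm_sub_le _ _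
    _ = 2 := by rw [norm_pow, norm_exp_ofReal_mul_I]; norm_num

end ChordProduct

section SuperlevelMeasure

open Set Filter Topology

variable {m : ℕ}

noncomputable def superlevelMeasure (φ : Fin m → ℝ) (h : ℝ) : ℝ :=
  (volume {t : ℝ | t ∈ Ico 0 (2 * π) ∧ h ≤ chordProduct φ t}).toReal

theorem superlevelMeasure_eq_restrict (φ : Fin m → ℝ) (h : ℝ) :
    superlevelMeasure φ h =
      (volume.restrict (Ico 0 (2 * π)) {t | h ≤ chordProduct φ t}).toReal := by
  rw [Measure.restrict_apply' measurableSet_Ico, inter_comm]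
  rfl

theorem superlevelMeasure_nonneg (φ : Fin m → ℝ) (h : ℝ) : 0 ≤ superlevelMeasure φ h :=
  ENNReal.toReal_nonneg

theorem superlevelMeasure_zero (φ : Fin m → ℝ) : superlevelMeasure φ 0 = 2 * π := by
  have hset : {t : ℝ | t ∈ Ico 0 (2 * π) ∧ 0 ≤ chordProduct φ t} = Ico 0 (2 * π) :=
    Set.ext fun t => and_iff_left (chordProduct_nonneg φ t)
  rw [superlevelMeasure, hset, Real.volume_Ico, sub_zero, ENNReal.toReal_ofReal two_pi_pos.le]

theorem superlevelMeasure_toIcoMod (φ : Fin m → ℝ) (h : ℝ) :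
    superlevelMeasure (fun j => toIcoMod two_pi_pos 0 (φ j)) h = superlevelMeasure φ h := by
  simp only [superlevelMeasure, chordProduct_toIcoMod_left]

theorem continuous_superlevelMeasure (hm : 0 < m) (h : ℝ) :
    Continuous fun φ : Fin m → ℝ => superlevelMeasure φ h := by
  simp only [superlevelMeasure_eq_restrict]
  refine continuous_iff_continuousAt.2 fun φ => ?_
  have hμ :
      ContinuousAt (fun ψ => volume.restrict (Ico 0 (2 * π)) {t | h ≤ chordProduct ψ t}) φ :=
    continuousAt_measure_setOf_le continuous_chordProduct_left
      (fun ψ => (continuous_chordProduct ψ).measurable)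
      (ae_restrict_of_ae (ae_chordProduct_ne hm φ h))
  have hfin : volume.restrict (Ico 0 (2 * π)) {t | h ≤ chordProduct φ t} ≠ ⊤ :=
    measure_ne_top _ _
  exact (ENNReal.tendsto_toReal hfin).comp hμ

theorem exists_forall_superlevelMeasure_le (hm : 0 < m) (h : ℝ) :
    ∃ φ : Fin m → ℝ, ∀ ψ : Fin m → ℝ, superlevelMeasure φ h ≤ superlevelMeasure ψ h := by
  obtain ⟨φ, -, hφ⟩ := (isCompact_univ_pi fun _ => isCompact_Icc).exists_isMinOn
    ⟨0, fun _ _ => ⟨le_rfl, two_pi_pos.le⟩⟩ (continuous_superlevelMeasure hm h).continuousOn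
  refine ⟨φ, fun ψ => ?_⟩
  rw [← superlevelMeasure_toIcoMod ψ]
  exact hφ fun j _ => Ico_subset_Icc_self (toIcoMod_mem_Ico' two_pi_pos (ψ j))

theorem volume_restrict_Ico_pos_of_isOpen {a b t : ℝ} {U : Set ℝ} (hU : IsOpen U) (htU : t ∈ U)
    (ht : t ∈ Ico a b) : 0 < volume.restrict (Ico a b) U := by
  have hnhds : U ∩ Ico a b ∈ 𝓝[≥] t :=
    inter_mem (mem_nhdsWithin_of_mem_nhds (hU.mem_nhds htU)) (Ico_mem_nhdsGE_of_mem ht)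
  obtain ⟨u, hu, hsub⟩ := mem_nhdsGE_iff_exists_Ico_subset.1 hnhds
  rw [Measure.restrict_apply hU.measurableSet]
  calc 0 < volume (Ico t u) := by rw [Real.volume_Ico]; exact ENNReal.ofReal_pos.2 (sub_pos.2 hu)
    _ ≤ volume (U ∩ Ico a b) := measure_mono hsub

theorem superlevelMeasure_lt_of_lt (hm : 0 < m) (φ : Fin m → ℝ) {h₁ h₂ : ℝ} (h₁_nonneg : 0 ≤ h₁)
    (hlt : h₁ < h₂) (h₂_le : h₂ ≤ 2) : superlevelMeasure φ h₂ < superlevelMeasure φ h₁ := by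
  set μ := volume.restrict (Ico 0 (2 * π))
  set B := chordProduct φ ⁻¹' Ioo h₁ h₂
  have hB_open : IsOpen B := isOpen_Ioo.preimage (continuous_chordProduct φ)
  have hB_pos : 0 < μ B := by
    obtain ⟨t, ht⟩ := Icc_subset_range_chordProduct hm φ
      (⟨by linarith, by linarith⟩ : (h₁ + h₂) / 2 ∈ Icc (0 : ℝ) 2)
    refine volume_restrict_Ico_pos_of_isOpen hB_open ?_ (toIcoMod_mem_Ico' two_pi_pos t)
    simp only [B, mem_preimage, chordProduct_toIcoMod, ht, mem_Ioo]
    constructor <;> linarith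
  have hB_disjoint : Disjoint {t | h₂ ≤ chordProduct φ t} B :=
    disjoint_left.2 fun t ht htB => not_le.2 htB.2 ht
  rw [superlevelMeasure_eq_restrict, superlevelMeasure_eq_restrict]
  refine ENNReal.toReal_strict_mono (measure_ne_top _ _) ?_
  calc μ {t | h₂ ≤ chordProduct φ t}
      < μ {t | h₂ ≤ chordProduct φ t} + μ B :=
        ENNReal.lt_add_right (measure_ne_top _ _) hB_pos.ne'
    _ = μ ({t | h₂ ≤ chordProduct φ t} ∪ B) :=
        (measure_union hB_disjoint hB_open.measurableSet).symm
    _ ≤ μ {t | h₁ ≤ chordProduct φ t} :=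
        measure_mono (union_subset (fun t ht => hlt.le.trans ht) fun t ht => ht.1.le)

theorem exists_superlevelMeasure_two_eq_zero (hm : 0 < m) :
    ∃ φ : Fin m → ℝ, superlevelMeasure φ 2 = 0 := by
  set φ : Fin m → ℝ := fun j => 2 * π * (j : ℕ) / m
  refine ⟨φ, (ENNReal.toReal_eq_zero_iff _).2 <| Or.inl <|
    measure_mono_null (fun t ht => ?_) (ae_iff.1 (ae_chordProduct_ne hm φ 2))⟩
  exact not_not.2 (le_antisymm (chordProduct_equispaced_le_two hm t) ht.2)

end SuperlevelMeasure

theorem stmt_16 (m : ℕ) (hm : 1 ≤ m) :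
    let meas : (Fin m → ℝ) → ℝ → ℝ := fun φ h =>
      (volume {t : ℝ | t ∈ Set.Ico 0 (2 * Real.pi) ∧
        h ≤ ∏ j, |2 * Real.sin ((t - φ j) / 2)|}).toReal
    let δ : ℝ → ℝ := fun h => sInf {μ : ℝ | ∃ φ : Fin m → ℝ, μ = meas φ h}
    StrictAntiOn δ (Set.Icc 0 2) ∧ δ 0 = 2 * Real.pi ∧ δ 2 = 0 ∧
      ∀ h ∈ Set.Icc (0 : ℝ) 2, ∃ φ : Fin m → ℝ, δ h = meas φ h := by
  intro meas δ
  have hδ_le : ∀ h φ, δ h ≤ superlevelMeasure φ h := fun h φ =>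
    csInf_le ⟨0, by rintro _ ⟨ψ, rfl⟩; exact superlevelMeasure_nonneg ψ h⟩ ⟨φ, rfl⟩
  have hδ_eq : ∀ h, ∃ φ, δ h = superlevelMeasure φ h := fun h => by
    obtain ⟨φ, hφ⟩ := exists_forall_superlevelMeasure_le hm h
    exact ⟨φ, IsLeast.csInf_eq ⟨⟨φ, rfl⟩, by rintro _ ⟨ψ, rfl⟩; exact hφ ψ⟩⟩
  refine ⟨fun h₁ hh₁ h₂ hh₂ hlt => ?_, ?_, ?_, fun h _ => hδ_eq h⟩
  · obtain ⟨φ, hφ⟩ := hδ_eq h₁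
    calc δ h₂ ≤ superlevelMeasure φ h₂ := hδ_le h₂ φ
      _ < superlevelMeasure φ h₁ := superlevelMeasure_lt_of_lt hm φ hh₁.1 hlt hh₂.2
      _ = δ h₁ := hφ.symm
  · obtain ⟨φ, hφ⟩ := hδ_eq 0
    rw [hφ, superlevelMeasure_zero]
  · obtain ⟨φ, hφ⟩ := exists_superlevelMeasure_two_eq_zero hm
    obtain ⟨ψ, hψ⟩ := hδ_eq 2
    exact le_antisymm (hφ ▸ hδ_le 2 φ) (hψ ▸ superlevelMeasure_nonneg ψ 2)
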